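/- Let τ and σ be π-compatible topologies on a set X. Then every nonempty τ-open set O can be written as O = V ∪ A, where V is a nonempty σ-open set and A is nowhere dense (equivalently, nowhere dense with respect to either topology); and symmetrically every nonempty σ-open set is the union of a nonempty τ-open set and a nowhere dense set. -/

import Mathlib

open Topology Set

/-- Topologies `τ` and `σ` on `X` are π-compatible if each is a π-network for the
other: every nonempty open set of either topology contains a nonempty open set of
the other topology. -/
def PiCompatible {X : Type*} (τ σ : TopologicalSpace X) : Prop :=
  (∀ O : Set X, IsOpen[σ] O → O.Nonempty → ∃ V : Set X, IsOpen[τ] V ∧ V.Nonempty ∧ V ⊆ O) ∧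
  (∀ O : Set X, IsOpen[τ] O → O.Nonempty → ∃ V : Set X, IsOpen[σ] V ∧ V.Nonempty ∧ V ⊆ O)

/-!
Take `V` to be the `σ`-interior of `O` and `A = O \ V`. A set is nowhere dense iff every
nonempty open set contains a nonempty open set missing it; stated this way, nowhere
density passes between π-compatible topologies. And `A` is `τ`-nowhere dense: a nonempty
`τ`-open set meeting `O` contains a nonempty `σ`-open subset of `O`, which lies in `V`,
and that in turn contains a nonempty `τ`-open set.
-/

theorem isNowhereDense_iff_forall_exists_isOpen_disjoint {X : Type*} [TopologicalSpace X]
    {A : Set X} :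
    IsNowhereDense A ↔
      ∀ U : Set X, IsOpen U → U.Nonempty → ∃ W ⊆ U, IsOpen W ∧ W.Nonempty ∧ Disjoint W A := by
  constructor
  · intro hA U hU hne
    have hU_not_sub : ¬U ⊆ closure A := fun hsub =>
      hne.ne_empty (subset_empty_iff.1 (hA ▸ interior_maximal hsub hU))
    exact ⟨U \ closure A, sdiff_subset, hU.sdiff isClosed_closure, sdiff_nonempty.2 hU_not_sub,
      disjoint_sdiff_left.mono_right subset_closure⟩
  · intro h
    rw [IsNowhereDense, eq_empty_iff_forall_notMem]
    intro x hx
    obtain ⟨W, hWU, hW, ⟨y, hy⟩, hWA⟩ := h _ isOpen_interior ⟨x, hx⟩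
    exact (hWA.closure_right hW).notMem_of_mem_left hy (interior_subset (hWU hy))

namespace PiCompatible

variable {X : Type*} {τ σ : TopologicalSpace X}

theorem symm (h : PiCompatible τ σ) : PiCompatible σ τ :=
  ⟨h.2, h.1⟩

theorem isNowhereDense {A : Set X} (h : PiCompatible τ σ) (hA : @IsNowhereDense X σ A) :
    @IsNowhereDense X τ A := by
  rw [@isNowhereDense_iff_forall_exists_isOpen_disjoint X σ] at hA
  rw [@isNowhereDense_iff_forall_exists_isOpen_disjoint X τ]
  intro U hU hne
  obtain ⟨U', hU', hU'ne, hU'U⟩ := h.2 U hU hne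
  obtain ⟨W, hWU', hW, hWne, hWA⟩ := hA U' hU' hU'ne
  obtain ⟨W', hW', hW'ne, hW'W⟩ := h.1 W hW hWne
  exact ⟨W', hW'W.trans (hWU'.trans hU'U), hW', hW'ne, hWA.mono_left hW'W⟩

theorem isNowhereDense_diff_interior {O : Set X} (h : PiCompatible τ σ) (hO : IsOpen[τ] O) :
    @IsNowhereDense X τ (O \ @interior X σ O) := by
  rw [@isNowhereDense_iff_forall_exists_isOpen_disjoint X τ]
  intro U hU hne
  by_cases hUO : (U ∩ O).Nonempty
  · obtain ⟨S, hS, hSne, hSUO⟩ := h.2 _ (@IsOpen.inter X τ _ _ hU hO) hUO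
    obtain ⟨W, hW, hWne, hWS⟩ := h.1 S hS hSne
    have hS_interior : S ⊆ @interior X σ O :=
      @interior_maximal X σ _ _ (hSUO.trans inter_subset_right) hS
    exact ⟨W, hWS.trans (hSUO.trans inter_subset_left), hW, hWne,
      disjoint_sdiff_right.mono_left (hWS.trans hS_interior)⟩
  · exact ⟨U, subset_rfl, hU, hne,
      (disjoint_iff_inter_eq_empty.2 (not_nonempty_iff_eq_empty.1 hUO)).mono_right sdiff_subset⟩

theorem exists_isOpen_union_isNowhereDense {O : Set X} (h : PiCompatible τ σ)
    (hO : IsOpen[τ] O) (hne : O.Nonempty) :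
    ∃ V A : Set X, IsOpen[σ] V ∧ V.Nonempty ∧
      @IsNowhereDense X τ A ∧ @IsNowhereDense X σ A ∧ O = V ∪ A := by
  obtain ⟨V₀, hV₀, hV₀ne, hV₀O⟩ := h.2 O hO hne
  have hA := h.isNowhereDense_diff_interior hO
  exact ⟨_, _, @isOpen_interior X σ O, hV₀ne.mono (@interior_maximal X σ _ _ hV₀O hV₀), hA,
    h.symm.isNowhereDense hA, (union_sdiff_cancel' subset_rfl (@interior_subset X σ O)).symm⟩

end PiCompatible

/-- If `τ` and `σ` are π-compatible, every nonempty `τ`-open set is the union of a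
nonempty `σ`-open set and a set which is nowhere dense (with respect to both
topologies), and vice versa. -/
theorem stmt_7 {X : Type*} (τ σ : TopologicalSpace X) (h : PiCompatible τ σ) :
    (∀ O : Set X, IsOpen[τ] O → O.Nonempty →
      ∃ V A : Set X, IsOpen[σ] V ∧ V.Nonempty ∧
        @IsNowhereDense X τ A ∧ @IsNowhereDense X σ A ∧ O = V ∪ A) ∧
    (∀ O : Set X, IsOpen[σ] O → O.Nonempty →
      ∃ V A : Set X, IsOpen[τ] V ∧ V.Nonempty ∧
        @IsNowhereDense X τ A ∧ @IsNowhereDense X σ A ∧ O = V ∪ A) := by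
  refine ⟨fun O hO hne => h.exists_isOpen_union_isNowhereDense hO hne, fun O hO hne => ?_⟩
  obtain ⟨V, A, hV, hVne, hAσ, hAτ, hOVA⟩ := h.symm.exists_isOpen_union_isNowhereDense hO hne
  exact ⟨V, A, hV, hVne, hAτ, hAσ, hOVA⟩
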